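/- Define on smooth functions g of (θ, ξ, φ₁, φ₂, φ₃) the differential operators E₁⁺g = ½ e^{i(φ₁−φ₂)}(∂g/∂ξ − i tanξ ∂g/∂φ₁ − i cotξ ∂g/∂φ₂), E₂⁺g = ½ e^{i(φ₂−φ₃)}(−sinξ ∂g/∂θ − cotθ cosξ ∂g/∂ξ − i (cotθ/sinξ) ∂g/∂φ₂ − i tanθ sinξ ∂g/∂φ₃), h₁g = −i(∂g/∂φ₁ − ∂g/∂φ₂), h₂g = −i(∂g/∂φ₂ − ∂g/∂φ₃). Let n ∈ ℕ and ψ(θ, ξ, φ₁, φ₂, φ₃) = (sin θ)^n (cos ξ)^n e^{i n φ₁}. Then at every point with 0 < θ < π/2 and 0 < ξ < π/2: E₁⁺ψ = 0, E₂⁺ψ = 0, h₁ψ = n·ψ, and h₂ψ = 0. (Hence ψ is a highest weight vector of weight n·μ₁ for the differential realisation of su(3) on SU(3)/SU(2) ≅ 𝕊⁵.) -/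

import Mathlib

/-- Partial derivative with respect to `θ` of a function of `(θ, ξ, φ₁, φ₂, φ₃)`. -/
noncomputable def dTheta5 (f : ℝ → ℝ → ℝ → ℝ → ℝ → ℂ) (θ ξ φ₁ φ₂ φ₃ : ℝ) : ℂ :=
  deriv (fun t => f t ξ φ₁ φ₂ φ₃) θ

/-- Partial derivative with respect to `ξ` of a function of `(θ, ξ, φ₁, φ₂, φ₃)`. -/
noncomputable def dXi5 (f : ℝ → ℝ → ℝ → ℝ → ℝ → ℂ) (θ ξ φ₁ φ₂ φ₃ : ℝ) : ℂ :=
  deriv (fun t => f θ t φ₁ φ₂ φ₃) ξ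

/-- Partial derivative with respect to `φ₁` of a function of `(θ, ξ, φ₁, φ₂, φ₃)`. -/
noncomputable def dPhi51 (f : ℝ → ℝ → ℝ → ℝ → ℝ → ℂ) (θ ξ φ₁ φ₂ φ₃ : ℝ) : ℂ :=
  deriv (fun t => f θ ξ t φ₂ φ₃) φ₁

/-- Partial derivative with respect to `φ₂` of a function of `(θ, ξ, φ₁, φ₂, φ₃)`. -/
noncomputable def dPhi52 (f : ℝ → ℝ → ℝ → ℝ → ℝ → ℂ) (θ ξ φ₁ φ₂ φ₃ : ℝ) : ℂ :=
  deriv (fun t => f θ ξ φ₁ t φ₃) φ₂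

/-- Partial derivative with respect to `φ₃` of a function of `(θ, ξ, φ₁, φ₂, φ₃)`. -/
noncomputable def dPhi53 (f : ℝ → ℝ → ℝ → ℝ → ℝ → ℂ) (θ ξ φ₁ φ₂ φ₃ : ℝ) : ℂ :=
  deriv (fun t => f θ ξ φ₁ φ₂ t) φ₃

/-- The raising operator `E₁⁺` of the differential realisation of `su(3)` on
`SU(3)/SU(2) ≅ 𝕊⁵`. -/
noncomputable def E1plus (f : ℝ → ℝ → ℝ → ℝ → ℝ → ℂ) (θ ξ φ₁ φ₂ φ₃ : ℝ) : ℂ :=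
  (1 / 2 : ℂ) * Complex.exp (Complex.I * ((φ₁ : ℂ) - (φ₂ : ℂ))) *
    (dXi5 f θ ξ φ₁ φ₂ φ₃
      - Complex.I * (Real.tan ξ : ℂ) * dPhi51 f θ ξ φ₁ φ₂ φ₃
      - Complex.I * (Real.cot ξ : ℂ) * dPhi52 f θ ξ φ₁ φ₂ φ₃)

/-- The raising operator `E₂⁺` of the differential realisation of `su(3)` on
`SU(3)/SU(2) ≅ 𝕊⁵`. -/
noncomputable def E2plus (f : ℝ → ℝ → ℝ → ℝ → ℝ → ℂ) (θ ξ φ₁ φ₂ φ₃ : ℝ) : ℂ :=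
  (1 / 2 : ℂ) * Complex.exp (Complex.I * ((φ₂ : ℂ) - (φ₃ : ℂ))) *
    (-(Real.sin ξ : ℂ) * dTheta5 f θ ξ φ₁ φ₂ φ₃
      - (Real.cot θ : ℂ) * (Real.cos ξ : ℂ) * dXi5 f θ ξ φ₁ φ₂ φ₃
      - Complex.I * ((Real.cot θ : ℂ) / (Real.sin ξ : ℂ)) * dPhi52 f θ ξ φ₁ φ₂ φ₃
      - Complex.I * (Real.tan θ : ℂ) * (Real.sin ξ : ℂ) * dPhi53 f θ ξ φ₁ φ₂ φ₃)

/-- The Cartan operator `h₁` of the differential realisation of `su(3)` on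
`SU(3)/SU(2) ≅ 𝕊⁵`. -/
noncomputable def hOne (f : ℝ → ℝ → ℝ → ℝ → ℝ → ℂ) (θ ξ φ₁ φ₂ φ₃ : ℝ) : ℂ :=
  -Complex.I * (dPhi51 f θ ξ φ₁ φ₂ φ₃ - dPhi52 f θ ξ φ₁ φ₂ φ₃)

/-- The Cartan operator `h₂` of the differential realisation of `su(3)` on
`SU(3)/SU(2) ≅ 𝕊⁵`. -/
noncomputable def hTwo (f : ℝ → ℝ → ℝ → ℝ → ℝ → ℂ) (θ ξ φ₁ φ₂ φ₃ : ℝ) : ℂ :=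
  -Complex.I * (dPhi52 f θ ξ φ₁ φ₂ φ₃ - dPhi53 f θ ξ φ₁ φ₂ φ₃)


private lemma hasDerivAt_sinpow (n : ℕ) (t : ℝ) :
    HasDerivAt (fun t : ℝ => ((Real.sin t : ℂ)) ^ n)
      ((n : ℂ) * (Real.sin t : ℂ) ^ (n - 1) * (Real.cos t : ℂ)) t := by
  have h := ((Real.hasDerivAt_sin t).pow n).ofReal_comp
  simp only [Pi.pow_apply, Complex.ofReal_pow, Complex.ofReal_mul, Complex.ofReal_natCast] at h
  exact h

private lemma hasDerivAt_cospow (n : ℕ) (t : ℝ) :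
    HasDerivAt (fun t : ℝ => ((Real.cos t : ℂ)) ^ n)
      ((n : ℂ) * (Real.cos t : ℂ) ^ (n - 1) * (-(Real.sin t : ℂ))) t := by
  have h := ((Real.hasDerivAt_cos t).pow n).ofReal_comp
  simp only [Pi.pow_apply, Complex.ofReal_pow, Complex.ofReal_mul, Complex.ofReal_natCast,
    Complex.ofReal_neg] at h
  exact h

private lemma hasDerivAt_cexp_lin (c : ℂ) (t : ℝ) :
    HasDerivAt (fun t : ℝ => Complex.exp (c * (t : ℂ))) (c * Complex.exp (c * (t : ℂ))) t := by
  have h : HasDerivAt (fun t : ℝ => c * (t : ℂ)) c t := by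
    simpa using (Complex.ofRealCLM.hasDerivAt (x := t)).const_mul c
  simpa [mul_comm] using h.cexp

/-- The function `ψ = (sin θ)^n (cos ξ)^n e^{inφ₁}` is a highest weight vector of weight
`n·μ₁` for the differential realisation of `su(3)` on `SU(3)/SU(2) ≅ 𝕊⁵`: it is
annihilated by `E₁⁺`, `E₂⁺` and `h₂` and is an eigenfunction of `h₁` with eigenvalue `n`. -/
theorem su3_highest_weight_vector (n : ℕ)
    (ψ : ℝ → ℝ → ℝ → ℝ → ℝ → ℂ)
    (hψdef : ψ = fun (θ ξ φ₁ _φ₂ _φ₃ : ℝ) =>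
      (Real.sin θ : ℂ) ^ n * (Real.cos ξ : ℂ) ^ n *
        Complex.exp (Complex.I * (n : ℂ) * (φ₁ : ℂ)))
    (θ ξ φ₁ φ₂ φ₃ : ℝ) (hθ0 : 0 < θ) (hθ : θ < Real.pi / 2)
    (hξ0 : 0 < ξ) (hξ : ξ < Real.pi / 2) :
    E1plus ψ θ ξ φ₁ φ₂ φ₃ = 0 ∧
    E2plus ψ θ ξ φ₁ φ₂ φ₃ = 0 ∧
    hOne ψ θ ξ φ₁ φ₂ φ₃ = (n : ℂ) * ψ θ ξ φ₁ φ₂ φ₃ ∧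
    hTwo ψ θ ξ φ₁ φ₂ φ₃ = 0 := by
  subst hψdef
  have hsθ : Real.sin θ ≠ 0 :=
    ne_of_gt (Real.sin_pos_of_pos_of_lt_pi hθ0 (hθ.trans (by linarith [Real.pi_pos])))
  have hcθ : Real.cos θ ≠ 0 :=
    ne_of_gt (Real.cos_pos_of_mem_Ioo ⟨by linarith [Real.pi_pos], hθ⟩)
  have hsξ : Real.sin ξ ≠ 0 :=
    ne_of_gt (Real.sin_pos_of_pos_of_lt_pi hξ0 (hξ.trans (by linarith [Real.pi_pos])))
  have hcξ : Real.cos ξ ≠ 0 :=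
    ne_of_gt (Real.cos_pos_of_mem_Ioo ⟨by linarith [Real.pi_pos], hξ⟩)
  have hsθ' : (Real.sin θ : ℂ) ≠ 0 := by exact_mod_cast hsθ
  have hcθ' : (Real.cos θ : ℂ) ≠ 0 := by exact_mod_cast hcθ
  have hsξ' : (Real.sin ξ : ℂ) ≠ 0 := by exact_mod_cast hsξ
  have hcξ' : (Real.cos ξ : ℂ) ≠ 0 := by exact_mod_cast hcξ
  have hCsθ : Complex.sin (θ : ℂ) ≠ 0 := by rw [← Complex.ofReal_sin]; exact hsθ'
  have hCcθ : Complex.cos (θ : ℂ) ≠ 0 := by rw [← Complex.ofReal_cos]; exact hcθ'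
  have hCsξ : Complex.sin (ξ : ℂ) ≠ 0 := by rw [← Complex.ofReal_sin]; exact hsξ'
  have hCcξ : Complex.cos (ξ : ℂ) ≠ 0 := by rw [← Complex.ofReal_cos]; exact hcξ'
  have htanξ : (Real.tan ξ : ℂ) = (Real.sin ξ : ℂ) / (Real.cos ξ : ℂ) := by
    rw [Real.tan_eq_sin_div_cos]; push_cast; ring
  have hcotθ : (Real.cot θ : ℂ) = (Real.cos θ : ℂ) / (Real.sin θ : ℂ) := by
    rw [Real.cot_eq_cos_div_sin]; push_cast; ring
  have hdθ : deriv (fun t : ℝ => (Real.sin t : ℂ) ^ n * (Real.cos ξ : ℂ) ^ n *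
        Complex.exp (Complex.I * (n : ℂ) * (φ₁ : ℂ))) θ =
      (n : ℂ) * (Real.sin θ : ℂ) ^ (n - 1) * (Real.cos θ : ℂ) * (Real.cos ξ : ℂ) ^ n *
        Complex.exp (Complex.I * (n : ℂ) * (φ₁ : ℂ)) :=
    (((hasDerivAt_sinpow n θ).mul_const _).mul_const _).deriv
  have hdξ : deriv (fun t : ℝ => (Real.sin θ : ℂ) ^ n * (Real.cos t : ℂ) ^ n *
        Complex.exp (Complex.I * (n : ℂ) * (φ₁ : ℂ))) ξ =
      (Real.sin θ : ℂ) ^ n * ((n : ℂ) * (Real.cos ξ : ℂ) ^ (n - 1) * (-(Real.sin ξ : ℂ))) *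
        Complex.exp (Complex.I * (n : ℂ) * (φ₁ : ℂ)) :=
    (((hasDerivAt_cospow n ξ).const_mul _).mul_const _).deriv
  have hd1 : deriv (fun t : ℝ => (Real.sin θ : ℂ) ^ n * (Real.cos ξ : ℂ) ^ n *
        Complex.exp (Complex.I * (n : ℂ) * (t : ℂ))) φ₁ =
      (Real.sin θ : ℂ) ^ n * (Real.cos ξ : ℂ) ^ n *
        (Complex.I * (n : ℂ) * Complex.exp (Complex.I * (n : ℂ) * (φ₁ : ℂ))) :=
    ((hasDerivAt_cexp_lin (Complex.I * (n : ℂ)) φ₁).const_mul _).deriv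
  have hd2 : deriv (fun _ : ℝ => (Real.sin θ : ℂ) ^ n * (Real.cos ξ : ℂ) ^ n *
        Complex.exp (Complex.I * (n : ℂ) * (φ₁ : ℂ))) φ₂ = 0 := deriv_const _ _
  have hd3 : deriv (fun _ : ℝ => (Real.sin θ : ℂ) ^ n * (Real.cos ξ : ℂ) ^ n *
        Complex.exp (Complex.I * (n : ℂ) * (φ₁ : ℂ))) φ₃ = 0 := deriv_const _ _
  have hI : Complex.I * Complex.I = -1 := Complex.I_mul_I
  have hpowθ : (Real.sin θ : ℂ) ^ n = (Real.sin θ : ℂ) ^ (n - 1) * (Real.sin θ : ℂ) ∨ n = 0 := by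
    rcases n with _ | m
    · right; rfl
    · left; rw [Nat.succ_sub_one]; ring
  have hpowξ : (Real.cos ξ : ℂ) ^ n = (Real.cos ξ : ℂ) ^ (n - 1) * (Real.cos ξ : ℂ) ∨ n = 0 := by
    rcases n with _ | m
    · right; rfl
    · left; rw [Nat.succ_sub_one]; ring
  refine ⟨?_, ?_, ?_, ?_⟩
  · simp only [E1plus, dXi5, dPhi51, dPhi52]
    rw [hdξ, hd1, hd2, htanξ]
    rcases hpowξ with h | h
    · rw [h]
      field_simp [hCcξ]
      ring_nf
      simp only [Complex.I_sq]
      ring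
    · subst h; simp
  · simp only [E2plus, dTheta5, dXi5, dPhi52, dPhi53]
    rw [hdθ, hdξ, hd2, hd3, hcotθ]
    rcases hpowθ with h | h
    · rcases hpowξ with h2 | h2
      · rw [h, h2]
        field_simp [hCsθ, hCcθ, hCsξ, hCcξ]
        ring_nf
      · subst h2; simp
    · subst h; simp
  · simp only [hOne, dPhi51, dPhi52]
    rw [hd1, hd2]
    linear_combination (-((n : ℂ)) * ((Real.sin θ : ℂ) ^ n * (Real.cos ξ : ℂ) ^ n *
      Complex.exp (Complex.I * (n : ℂ) * (φ₁ : ℂ)))) * hI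
  · simp only [hTwo, dPhi52, dPhi53]
    rw [hd2, hd3]
    ring
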